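/- For every real constant C, the function y(x) = (−(10/9)·ln(x+4) − 4/(x+4) + (1/9)·(x−5)·ln(x−5)/(x+4) + C)·(x+4) is differentiable on the interval (5, ∞) and satisfies y'(x) = (x − y(x) − ln(x−5))/(−x−4) for all x > 5. -/

import Mathlib

/-- The candidate solution
`y(x) = (−(10/9)·ln(x+4) − 4/(x+4) + (1/9)·(x−5)·ln(x−5)/(x+4) + C)·(x+4)`. -/
noncomputable def ySol (C : ℝ) : ℝ → ℝ := fun x =>
  (-(10 / 9) * Real.log (x + 4) - 4 / (x + 4)
      + (1 / 9) * (x - 5) * Real.log (x - 5) / (x + 4) + C) * (x + 4)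

/-!
Away from `x = -4` the factor `x + 4` cancels the denominators, so `ySol C` is a combination
of `t ↦ t log t` at `t = x + 4` and `t = x - 5` with an affine function. Its derivative is
`C - 1 - (10/9) log (x + 4) + (1/9) log (x - 5)`, and substituting the cleared form of
`ySol C x` into the right-hand side of the equation gives the same expression, because
`(1/9)(x - 5) log (x - 5) + log (x - 5) = (1/9)(x + 4) log (x - 5)`.
-/

open Real Filter Topology

noncomputable def ySolCleared (C x : ℝ) : ℝ :=
  -(10 / 9) * ((x + 4) * log (x + 4)) - 4 + (1 / 9) * ((x - 5) * log (x - 5)) + C * (x + 4)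

lemma ySol_eq_ySolCleared {x : ℝ} (C : ℝ) (hx : x + 4 ≠ 0) : ySol C x = ySolCleared C x := by
  simp only [ySol, ySolCleared]
  field_simp

lemma hasDerivAt_ySolCleared {x : ℝ} (C : ℝ) (h4 : x + 4 ≠ 0) (h5 : x - 5 ≠ 0) :
    HasDerivAt (ySolCleared C)
      (-(10 / 9) * (log (x + 4) + 1) + 1 / 9 * (log (x - 5) + 1) + C * 1) x :=
  (((((hasDerivAt_mul_log h4).comp_add_const x 4).const_mul _).sub_const 4).add
    (((hasDerivAt_mul_log h5).comp_sub_const x 5).const_mul _)).add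
    (((hasDerivAt_id x).add_const 4).const_mul C)

lemma hasDerivAt_ySol {x : ℝ} (C : ℝ) (h4 : x + 4 ≠ 0) (h5 : x - 5 ≠ 0) :
    HasDerivAt (ySol C) (C - 1 - 10 / 9 * log (x + 4) + 1 / 9 * log (x - 5)) x := by
  have hev : ySol C =ᶠ[𝓝 x] ySolCleared C := by
    filter_upwards [eventually_ne_nhds (b := (-4 : ℝ)) (by contrapose! h4; linarith)] with t ht
    exact ySol_eq_ySolCleared C (by contrapose! ht; linarith)
  exact ((hasDerivAt_ySolCleared C h4 h5).congr_of_eventuallyEq hev).congr_deriv (by ring)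

/-- For every constant `C`, `ySol C` is differentiable on `(5, ∞)` and solves
`y' = (x − y − ln(x−5))/(−x−4)` there. -/
theorem ySol_solves_1ode (C : ℝ) :
    ∀ x : ℝ, 5 < x →
      HasDerivAt (ySol C)
        ((x - ySol C x - Real.log (x - 5)) / (-x - 4)) x := by
  intro x hx
  have h4 : x + 4 ≠ 0 := by linarith
  convert hasDerivAt_ySol C h4 (by linarith) using 1
  rw [ySol_eq_ySolCleared C h4, ySolCleared, div_eq_iff (by linarith)]
  ring
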